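/- arXiv:math/0011142 — 3 statements merged into one kernel-verified Lean document; each statement's English description precedes it below -/
import Mathlib

section
/- Let n ∈ ℕ, let r be a reflexive transitive relation on Fin n, and let A(r) ⊆ Matrix (Fin n) (Fin n) ℂ be the associated digraph algebra. Let ~ be the equivalence relation i ~ j ↔ (r i j ∧ r j i), and for each equivalence class C of ~ let E_C be the diagonal matrix with (E_C) i i = 1 if i ∈ C and 0 otherwise (these are the minimal central projections of A(r) ∩ A(r)*). Suppose P_1, …, P_s and Q_1, …, Q_s are diagonal matrices all of whose diagonal entries are 0 or 1 (standard projections in A(r)), with P_j · P_k = 0 and Q_j · Q_k = 0 whenever j ≠ k. If rank(E_C · P_j · E_C) = rank(E_C · Q_j · E_C) for every equivalence class C and every j = 1, …, s, then there exists a permutation σ of Fin n with σ i ~ i for every i, such that its permutation matrix U (a unitary lying in A(r) ∩ A(r)*) satisfies Uᴴ · P_j · U = Q_j for every j = 1, …, s. -/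
/-!
By orthogonality, every index `i` lies in the diagonal support of at most one `P j`; this gives
`i` a label in `Option (Fin s)`. The rank of `E_C P_j E_C` counts the indices of the class `C`
labelled `j`, so the rank hypothesis says that in every class each label `j` occurs as often for
the `P`'s as for the `Q`'s, and then so does the label `none`. A permutation matching the fibres
of `i ↦ (class of i, Q-label of i)` with those of `i ↦ (class of i, P-label of i)` stays inside
the classes, and its permutation matrix conjugates each `P j` to `Q j`.
-/

open Matrix

noncomputable section

/-- The digraph algebra `A(r)`: matrices supported on the relation `r`. -/
def digraphAlg (n : ℕ) (r : Fin n → Fin n → Prop) : Set (Matrix (Fin n) (Fin n) ℂ) :=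
  {M | ∀ i j, ¬ r i j → M i j = 0}

/-- `C*(A(r))`: the *-subalgebra of `Mₙ(ℂ)` generated by `A(r)`. -/
def cstarAlg (n : ℕ) (r : Fin n → Fin n → Prop) : Set (Matrix (Fin n) (Fin n) ℂ) :=
  (StarAlgebra.adjoin ℂ (digraphAlg n r) : StarSubalgebra ℂ (Matrix (Fin n) (Fin n) ℂ))

/-- A star-extendible homomorphism `A(r₁) → A(r₂)`, as (the extension to `C*(A(r₁))` of) a
function which is a ⋆-algebra homomorphism on `C*(A(r₁))` and maps `A(r₁)` into `A(r₂)`. -/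
def IsStarExtHom (n m : ℕ) (r₁ : Fin n → Fin n → Prop) (r₂ : Fin m → Fin m → Prop)
    (Φ : Matrix (Fin n) (Fin n) ℂ → Matrix (Fin m) (Fin m) ℂ) : Prop :=
  (∀ x ∈ cstarAlg n r₁, ∀ y ∈ cstarAlg n r₁, Φ (x + y) = Φ x + Φ y) ∧
  (∀ (c : ℂ), ∀ x ∈ cstarAlg n r₁, Φ (c • x) = c • Φ x) ∧
  (∀ x ∈ cstarAlg n r₁, ∀ y ∈ cstarAlg n r₁, Φ (x * y) = Φ x * Φ y) ∧
  (∀ x ∈ cstarAlg n r₁, Φ xᴴ = (Φ x)ᴴ) ∧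
  (∀ a ∈ digraphAlg n r₁, Φ a ∈ digraphAlg m r₂)

/-- `Φ` has multiplicity one: every diagonal matrix unit is sent to a matrix of rank ≤ 1. -/
def MultOne (n m : ℕ) (Φ : Matrix (Fin n) (Fin n) ℂ → Matrix (Fin m) (Fin m) ℂ) : Prop :=
  ∀ i : Fin n, (Φ (Matrix.single i i (1 : ℂ))).rank ≤ 1

/-- `Φ` is regular (1-decomposable): a finite direct sum of multiplicity one star-extendible
homomorphisms with mutually orthogonal ranges. -/
def IsRegularHom (n m : ℕ) (r₁ : Fin n → Fin n → Prop) (r₂ : Fin m → Fin m → Prop)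
    (Φ : Matrix (Fin n) (Fin n) ℂ → Matrix (Fin m) (Fin m) ℂ) : Prop :=
  IsStarExtHom n m r₁ r₂ Φ ∧
  ∃ (d : ℕ) (Ψ : Fin d → Matrix (Fin n) (Fin n) ℂ → Matrix (Fin m) (Fin m) ℂ),
    (∀ t, IsStarExtHom n m r₁ r₂ (Ψ t) ∧ MultOne n m (Ψ t)) ∧
    (∀ s t, s ≠ t → Ψ s 1 * Ψ t 1 = 0) ∧
    (∀ x ∈ cstarAlg n r₁, Φ x = ∑ t, Ψ t x)

/-- The partial isometry normaliser `N_{Dₘ}(A(r))` of the diagonal masa in `A(r)`. -/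
def diagNormaliser (m : ℕ) (r : Fin m → Fin m → Prop) : Set (Matrix (Fin m) (Fin m) ℂ) :=
  {v | v ∈ digraphAlg m r ∧ v * vᴴ * v = v ∧
    ∀ d : Matrix (Fin m) (Fin m) ℂ, d.IsDiag → (vᴴ * d * v).IsDiag ∧ (v * d * vᴴ).IsDiag}

/-- `Φ` is standard regular: regular and mapping the diagonal normaliser into the
diagonal normaliser. -/
def IsStandardRegularHom (n m : ℕ) (r₁ : Fin n → Fin n → Prop) (r₂ : Fin m → Fin m → Prop)
    (Φ : Matrix (Fin n) (Fin n) ℂ → Matrix (Fin m) (Fin m) ℂ) : Prop :=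
  IsRegularHom n m r₁ r₂ Φ ∧ ∀ v ∈ diagNormaliser n r₁, Φ v ∈ diagNormaliser m r₂

/-- A unitary element of the digraph algebra `A(r)`. -/
def IsUnitaryIn (m : ℕ) (r : Fin m → Fin m → Prop) (U : Matrix (Fin m) (Fin m) ℂ) : Prop :=
  U ∈ digraphAlg m r ∧ Uᴴ * U = 1 ∧ U * Uᴴ = 1

/-- The L²→L² operator norm of a matrix. -/
def l2OpNorm {k : ℕ} (a : Matrix (Fin k) (Fin k) ℂ) : ℝ :=
  ‖Matrix.toEuclideanCLM (𝕜 := ℂ) a‖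

open scoped Classical

open Finset

theorem card_filter_eq_of_card_filter_some_eq {ι γ : Type*} [Fintype γ] [DecidableEq γ]
    (t : Finset ι) {f g : ι → Option γ}
    (h : ∀ j, #{i ∈ t | f i = some j} = #{i ∈ t | g i = some j})
    (v : Option γ) : #{i ∈ t | f i = v} = #{i ∈ t | g i = v} := by
  cases v with
  | some j => exact h j
  | none =>
    -- both labellings partition `t`, and they agree on every fibre but `none`
    have hf := card_eq_sum_card_fiberwise (f := f) (s := t) (t := univ) fun _ _ => mem_univ _
    have hg := card_eq_sum_card_fiberwise (f := g) (s := t) (t := univ) fun _ _ => mem_univ _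
    rw [Fintype.sum_option] at hf hg
    simp only [h] at hf
    omega

section Counting

variable {ι : Type*} [Fintype ι]

theorem exists_perm_comp_eq_of_card_fiber_eq {κ : Type*} [DecidableEq κ] {f g : ι → κ}
    (h : ∀ c, #{i | f i = c} = #{i | g i = c}) : ∃ σ : Equiv.Perm ι, ∀ i, f (σ i) = g i :=
  ⟨Equiv.ofFiberEquiv fun c => Fintype.equivOfCardEq <| by
      simp only [Fintype.card_subtype, h],
    Equiv.ofFiberEquiv_map _⟩

theorem Setoid.exists_perm_rel_and_eq_of_card_eq (s : Setoid ι) {γ : Type*} [Fintype γ]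
    [DecidableEq γ] {f g : ι → Option γ}
    (h : ∀ i j, #{k | s i k ∧ f k = some j} = #{k | s i k ∧ g k = some j}) :
    ∃ σ : Equiv.Perm ι, ∀ i, s (σ i) i ∧ f (σ i) = g i := by
  obtain ⟨σ, hσ⟩ := exists_perm_comp_eq_of_card_fiber_eq
    (f := fun i => (Quotient.mk s i, f i)) (g := fun i => (Quotient.mk s i, g i)) <| by
    rintro ⟨q, v⟩
    induction q using Quotient.inductionOn with | h i => ?_
    have fiber (F : ι → Option γ) :
        #{k | (Quotient.mk s k, F k) = (Quotient.mk s i, v)} = #{k ∈ {k | s i k} | F k = v} := by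
      rw [filter_filter]
      simp only [Prod.mk.injEq, Quotient.eq, s.comm]
    rw [fiber, fiber]
    exact card_filter_eq_of_card_filter_some_eq _
      (fun j => by simpa only [filter_filter] using h i j) v
  exact ⟨σ, fun i =>
    ⟨Quotient.exact (congrArg Prod.fst (hσ i)), congrArg Prod.snd (hσ i)⟩⟩

end Counting

section DiagLabel

variable {ι κ R : Type*}

def diagLabel [Zero R] (P : κ → Matrix ι ι R) (i : ι) : Option κ :=
  if h : ∃ j, P j i i ≠ 0 then some h.choose else none

theorem Matrix.IsDiag.mul_apply_self [Fintype ι] [NonUnitalNonAssocSemiring R]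
    {A : Matrix ι ι R} (hA : A.IsDiag) (B : Matrix ι ι R) (i : ι) :
    (A * B) i i = A i i * B i i := by
  classical
  conv_lhs => rw [← hA.diagonal_diag]
  exact diagonal_mul ..

variable [Fintype ι] [NonAssocSemiring R] [NoZeroDivisors R] {P : κ → Matrix ι ι R}

theorem diagLabel_eq_some_iff (hdiag : ∀ j, (P j).IsDiag)
    (horth : Pairwise fun j k => P j * P k = 0) {i : ι} {j : κ} :
    diagLabel P i = some j ↔ P j i i ≠ 0 := by
  by_cases h : ∃ k, P k i i ≠ 0
  · have unique : ∀ k, P k i i ≠ 0 → k = h.choose := fun k hk => by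
      by_contra hne
      have := congrFun (congrFun (horth hne) i) i
      rw [(hdiag k).mul_apply_self] at this
      exact mul_ne_zero hk h.choose_spec this
    simp only [diagLabel, h, dif_pos, Option.some.injEq]
    exact ⟨fun hj => hj ▸ h.choose_spec, fun hj => (unique j hj).symm⟩
  · push Not at h
    simp [diagLabel, h]

theorem apply_self_eq_ite_diagLabel (hdiag : ∀ j, (P j).IsDiag)
    (horth : Pairwise fun j k => P j * P k = 0) (h01 : ∀ j i, P j i i = 0 ∨ P j i i = 1)
    (j : κ) (i : ι) : P j i i = if diagLabel P i = some j then 1 else 0 := by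
  split_ifs with h
  · exact (h01 j i).resolve_left ((diagLabel_eq_some_iff hdiag horth).mp h)
  · exact not_not.mp (mt (diagLabel_eq_some_iff hdiag horth).mpr h)

theorem submatrix_eq_of_diagLabel_eq {P Q : κ → Matrix ι ι R}
    (hPdiag : ∀ j, (P j).IsDiag) (hQdiag : ∀ j, (Q j).IsDiag)
    (hP01 : ∀ j i, P j i i = 0 ∨ P j i i = 1) (hQ01 : ∀ j i, Q j i i = 0 ∨ Q j i i = 1)
    (hPorth : Pairwise fun j k => P j * P k = 0) (hQorth : Pairwise fun j k => Q j * Q k = 0)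
    (σ : Equiv.Perm ι) (hσ : ∀ i, diagLabel P (σ i) = diagLabel Q i) (j : κ) :
    (P j).submatrix σ σ = Q j := by
  ext a b
  rcases eq_or_ne a b with rfl | hab
  · rw [submatrix_apply, apply_self_eq_ite_diagLabel hPdiag hPorth hP01,
      apply_self_eq_ite_diagLabel hQdiag hQorth hQ01, hσ]
  · rw [submatrix_apply, hPdiag j (σ.injective.ne hab), hQdiag j hab]

end DiagLabel

theorem Matrix.rank_diagonal_mul_mul_diagonal {ι K : Type*} [Fintype ι] [DecidableEq ι]
    [Field K] {D : Matrix ι ι K} (hD : D.IsDiag) (e : ι → K) :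
    (diagonal e * D * diagonal e).rank = #{k | e k ≠ 0 ∧ D k k ≠ 0} := by
  classical
  conv_lhs => rw [← hD.diagonal_diag]
  rw [diagonal_mul_diagonal, diagonal_mul_diagonal, rank_diagonal, Fintype.card_subtype]
  simp only [diag_apply, ne_eq, mul_eq_zero, not_or]
  exact congrArg card (filter_congr fun _ _ => by tauto)

section PermMatrix

variable {ι R : Type*} [DecidableEq ι]

theorem Matrix.of_ite_eq_permMatrix_inv [Zero R] [One R] (σ : Equiv.Perm ι) :
    Matrix.of (fun i j => if i = σ j then (1 : R) else 0) = σ⁻¹.permMatrix R := by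
  ext i j
  simp [PEquiv.toMatrix_apply, Equiv.symm_apply_eq]

theorem Matrix.permMatrix_mul_mul_permMatrix_inv [Fintype ι] [NonAssocSemiring R]
    (σ : Equiv.Perm ι) (M : Matrix ι ι R) :
    σ.permMatrix R * M * σ⁻¹.permMatrix R = M.submatrix σ σ := by
  rw [PEquiv.toMatrix_toPEquiv_mul, PEquiv.mul_toMatrix_toPEquiv, submatrix_submatrix]
  rfl

end PermMatrix

theorem permMatrix_mem_digraphAlg {n : ℕ} {r : Fin n → Fin n → Prop} {σ : Equiv.Perm (Fin n)}
    (h : ∀ i, r i (σ i)) : σ.permMatrix ℂ ∈ digraphAlg n r := by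
  intro i j hij
  simp only [PEquiv.toMatrix_apply, Equiv.toPEquiv_apply, Option.mem_def, Option.some.injEq]
  rw [if_neg]
  rintro rfl
  exact hij (h i)

/-- If two families of pairwise orthogonal standard (diagonal 0–1) projections
in a digraph algebra `A(r)` have matching ranks against each minimal central projection `E_C`
of `A(r) ∩ A(r)*` (the classes `C` of the equivalence relation `i ~ j ↔ r i j ∧ r j i`),
then they are conjugate by a standard permutation unitary of `A(r) ∩ A(r)*` whose permutation
`σ` satisfies `σ i ~ i` for all `i`. -/
theorem digraphAlg_standard_proj_conjugacy (n s : ℕ) (r : Fin n → Fin n → Prop)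
    (hrefl : Reflexive r) (htrans : Transitive r)
    (P Q : Fin s → Matrix (Fin n) (Fin n) ℂ)
    (hPdiag : ∀ j, (P j).IsDiag) (hQdiag : ∀ j, (Q j).IsDiag)
    (hP01 : ∀ j i, P j i i = 0 ∨ P j i i = 1)
    (hQ01 : ∀ j i, Q j i i = 0 ∨ Q j i i = 1)
    (hPorth : ∀ j k, j ≠ k → P j * P k = 0)
    (hQorth : ∀ j k, j ≠ k → Q j * Q k = 0)
    (E : Fin n → Matrix (Fin n) (Fin n) ℂ)
    (hE : ∀ i, E i = Matrix.diagonal (fun k => if r i k ∧ r k i then (1 : ℂ) else 0))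
    (hrank : ∀ (i : Fin n) (j : Fin s), (E i * P j * E i).rank = (E i * Q j * E i).rank) :
    ∃ σ : Equiv.Perm (Fin n),
      (∀ i, r (σ i) i ∧ r i (σ i)) ∧
      ∃ U : Matrix (Fin n) (Fin n) ℂ,
        U = Matrix.of (fun i j => if i = σ j then (1 : ℂ) else 0) ∧
        U ∈ digraphAlg n r ∧ Uᴴ ∈ digraphAlg n r ∧ Uᴴ * U = 1 ∧ U * Uᴴ = 1 ∧
        ∀ j, Uᴴ * P j * U = Q j := by
  have : IsPreorder (Fin n) r := { refl := hrefl, trans := fun _ _ _ => @htrans _ _ _ }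
  let S := AntisymmRel.setoid (Fin n) r
  have hrank_eq_card (R : Fin s → Matrix (Fin n) (Fin n) ℂ) (hdiag : ∀ j, (R j).IsDiag)
      (i : Fin n) (j : Fin s) :
      (E i * R j * E i).rank = #{k | S i k ∧ R j k k ≠ 0} := by
    rw [hE, rank_diagonal_mul_mul_diagonal (hdiag j)]
    congr! 3
    simp [S, AntisymmRel]
  have hcount (i : Fin n) (j : Fin s) :
      #{k | S i k ∧ diagLabel P k = some j} = #{k | S i k ∧ diagLabel Q k = some j} := by
    simp only [diagLabel_eq_some_iff hPdiag hPorth, diagLabel_eq_some_iff hQdiag hQorth]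
    rw [← hrank_eq_card P hPdiag, ← hrank_eq_card Q hQdiag, hrank]
  obtain ⟨σ, hσ⟩ := S.exists_perm_rel_and_eq_of_card_eq hcount
  refine ⟨σ, fun i => (hσ i).1, _, rfl, ?_⟩
  rw [of_ite_eq_permMatrix_inv, conjTranspose_permMatrix, inv_inv]
  refine ⟨permMatrix_mem_digraphAlg fun i => ?_, permMatrix_mem_digraphAlg fun i => (hσ i).1.2,
    ?_, ?_, fun j => ?_⟩
  · simpa using (hσ (σ⁻¹ i)).1.1
  · rw [← permMatrix_mul, inv_mul_cancel, permMatrix_one]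
  · rw [← permMatrix_mul, mul_inv_cancel, permMatrix_one]
  · rw [permMatrix_mul_mul_permMatrix_inv]
    exact submatrix_eq_of_diagLabel_eq hPdiag hQdiag hP01 hQ01 hPorth hQorth σ
      (fun i => (hσ i).2) j

end
end

section
/- Let r₁ be a reflexive transitive relation on Fin n and let φ, ψ : A(r₁) → A(r₂) ⊆ Matrix (Fin m) (Fin m) ℂ be multiplicity-one star-extendible homomorphisms with *-extensions Φ, Ψ : C*(A(r₁)) → Matrix (Fin m) (Fin m) ℂ. Suppose that Φ(e_ii) = Ψ(e_ii) for every i ∈ Fin n, where e_ii = stdBasisMatrix i i 1, and that each Φ(e_ii) is a diagonal matrix. Then there exists a diagonal unitary V ∈ Matrix (Fin m) (Fin m) ℂ such that Ψ(x) = Vᴴ · Φ(x) · V for all x ∈ C*(A(r₁)). -/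
open Matrix

noncomputable section

/-!
Each diagonal matrix unit `eᵢᵢ` is sent to `0` or to a diagonal matrix unit `f_kk`. If
`eᵢᵢ ↦ f_kk` and `eⱼⱼ ↦ f_ll`, then the corner `eᵢᵢ x eⱼⱼ` lies in `C*(A(r₁))`, and comparing the
images of `(eᵢᵢ x eⱼⱼ)(eᵢᵢ y eⱼⱼ)* = x_ij conj(y_ij) eᵢᵢ` gives
`Φ(x)_kl conj(Φ(y)_kl) = x_ij conj(y_ij)`, and the same for `Ψ`; all other entries of `Φ(x)`
and `Ψ(x)` vanish. Hence `Ψ(x)_kl = u_kl Φ(x)_kl` for a phase `u_kl` independent of `x`.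
Factoring through `eⱼⱼ` makes `u` a cocycle on the partial equivalence relation
"`Φ(x)_kl ≠ 0` for some `x`", and picking a base point in each class writes it as
`u_kl = conj(v_k) v_l`; then `V = diag(v)`.
-/

theorem Matrix.IsDiag.eq_zero_or_eq_single_of_rank_le_one {K κ : Type*} [Field K] [Fintype κ]
    [DecidableEq κ] {P : Matrix κ κ K} (hdiag : P.IsDiag) (hidem : IsIdempotentElem P)
    (hrank : P.rank ≤ 1) : P = 0 ∨ ∃ k, P = single k k 1 := by
  classical
  rw [← hdiag.diagonal_diag] at hidem hrank ⊢
  set d := P.diag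
  rw [rank_diagonal, Fintype.card_le_one_iff_subsingleton] at hrank
  rw [IsIdempotentElem, diagonal_mul_diagonal, diagonal_eq_diagonal_iff] at hidem
  by_cases hzero : ∀ t, d t = 0
  · left
    rw [show d = 0 from funext hzero]
    exact diagonal_zero
  · push Not at hzero
    obtain ⟨k, hk⟩ := hzero
    refine Or.inr ⟨k, ?_⟩
    rw [← diagonal_single]
    congr 1
    funext t
    by_cases htk : t = k
    · subst htk
      simpa [hk] using hidem t
    · by_contra ht
      exact htk (congrArg Subtype.val (Subsingleton.elim (⟨t, by simpa [htk] using ht⟩ :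
        {t // d t ≠ 0}) ⟨k, hk⟩))

theorem exists_coboundary_of_cocycle {κ G : Type*} [Group G] {R : κ → κ → Prop}
    (hsymm : ∀ {k l}, R k l → R l k) (htrans : ∀ {k l l'}, R k l → R l l' → R k l')
    (u : κ → κ → G) (hu : ∀ {k l l'}, R k l → R l l' → u k l' = u k l * u l l') :
    ∃ v : κ → G, ∀ {k l}, R k l → u k l = (v k)⁻¹ * v l := by
  let s : Setoid κ :=
    { r := fun k l => k = l ∨ R k l
      iseqv :=
        { refl := fun _ => Or.inl rfl
          symm := by
            rintro k l (rfl | h)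
            exacts [Or.inl rfl, Or.inr (hsymm h)]
          trans := by
            rintro k l l' (rfl | h) (rfl | h')
            exacts [Or.inl rfl, Or.inr h', Or.inr h, Or.inr (htrans h h')] } }
  let base (k : κ) : κ := (Quotient.mk s k).out
  have hbase {k l} (hkl : R k l) : base k = base l :=
    congrArg Quotient.out (Quotient.sound (Or.inr hkl))
  have hbase_rel {k l} (hkl : R k l) : R (base k) k := by
    rcases Quotient.mk_out (s := s) k with h | h
    · change base k = k at h
      rw [h]
      exact htrans hkl (hsymm hkl)
    · exact h
  refine ⟨fun k => u (base k) k, fun {k l} hkl => ?_⟩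
  change u k l = (u (base k) k)⁻¹ * u (base l) l
  rw [← hbase hkl, hu (hbase_rel hkl) hkl, inv_mul_cancel_left]

theorem Complex.exists_circle_mul_of_mul_star_eq {α : Type*} (a b : α → ℂ)
    (h : ∀ x y, a x * star (a y) = b x * star (b y)) : ∃ c : Circle, ∀ x, b x = c * a x := by
  by_cases hzero : ∀ x, a x = 0
  · refine ⟨1, fun x => ?_⟩
    have := h x x
    rw [hzero x, zero_mul, eq_comm, CStarRing.mul_star_self_eq_zero_iff] at this
    simp [this, hzero x]
  push Not at hzero
  obtain ⟨x₀, hx₀⟩ := hzero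
  have hnorm : ‖b x₀ / a x₀‖ = 1 := by
    have := h x₀ x₀
    rw [Complex.star_def, Complex.mul_conj', Complex.mul_conj'] at this
    rw [norm_div, div_eq_one_iff_eq (norm_ne_zero_iff.mpr hx₀)]
    exact ((pow_left_inj₀ (norm_nonneg _) (norm_nonneg _) two_ne_zero).mp
      (by exact_mod_cast this)).symm
  refine ⟨⟨b x₀ / a x₀, mem_sphere_zero_iff_norm.mpr hnorm⟩, fun x => ?_⟩
  have hstar : star (a x₀) ≠ 0 := star_ne_zero.mpr hx₀
  show b x = b x₀ / a x₀ * a x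
  rw [div_mul_eq_mul_div, eq_div_iff hx₀]
  apply mul_right_cancel₀ hstar
  linear_combination b x * h x₀ x₀ - b x₀ * h x x₀

section MatrixUnits

variable {ι κ : Type*} [Fintype ι] [DecidableEq ι] [Fintype κ]
  {A : StarSubalgebra ℂ (Matrix ι ι ℂ)} (hA : ∀ i, single i i (1 : ℂ) ∈ A)
  (f g : A →⋆ₙₐ[ℂ] Matrix κ κ ℂ)

theorem sum_map_single_one : ∑ i, f ⟨single i i 1, hA i⟩ = f 1 := by
  rw [← map_sum]
  congr 1
  ext1
  simp [sum_single_one]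

variable [DecidableEq κ]

theorem exists_map_single_eq_of_apply_ne_zero
    (hf : ∀ i, f ⟨single i i 1, hA i⟩ = 0 ∨ ∃ k, f ⟨single i i 1, hA i⟩ = single k k 1)
    {x : A} {k l : κ} (hx : f x k l ≠ 0) :
    (∃ i, f ⟨single i i 1, hA i⟩ = single k k 1) ∧
      ∃ j, f ⟨single j j 1, hA j⟩ = single l l 1 := by
  have row {x : A} {k l : κ} (hx : f x k l ≠ 0) : ∃ i, f ⟨single i i 1, hA i⟩ = single k k 1 := by
    rw [← one_mul x, map_mul, ← sum_map_single_one hA, Finset.sum_mul, Matrix.sum_apply] at hx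
    obtain ⟨i, -, hi⟩ := Finset.exists_ne_zero_of_sum_ne_zero hx
    refine ⟨i, ?_⟩
    rcases hf i with h | ⟨k', h⟩
    · simp [h] at hi
    · obtain rfl : k' = k := by
        by_contra hne
        exact hi (h ▸ single_mul_apply_of_ne _ _ _ _ _ (Ne.symm hne) _)
      exact h
  refine ⟨row hx, row (x := star x) (k := l) (l := k) ?_⟩
  rwa [map_star, star_eq_conjTranspose, conjTranspose_apply, star_ne_zero]

theorem map_apply_mul_star_map_apply {i j : ι} {k l : κ}
    (hi : f ⟨single i i 1, hA i⟩ = single k k 1) (hj : f ⟨single j j 1, hA j⟩ = single l l 1)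
    (x y : A) :
    f x k l * star (f y k l) = (x : Matrix ι ι ℂ) i j * star ((y : Matrix ι ι ℂ) i j) := by
  set Ei : A := ⟨single i i 1, hA i⟩
  set Ej : A := ⟨single j j 1, hA j⟩
  have hcorner : Ei * x * Ej * star (Ei * y * Ej) =
      ((x : Matrix ι ι ℂ) i j * star ((y : Matrix ι ι ℂ) i j)) • Ei := by
    ext1
    simp only [MulMemClass.coe_mul, StarMemClass.coe_star, SetLike.val_smul, Ei, Ej]
    rw [single_mul_mul_single, single_mul_mul_single, star_eq_conjTranspose,
      conjTranspose_single, single_mul_single_same, smul_single]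
    simp
  have := congrArg f hcorner
  simp only [map_mul, map_star, map_smul, hi, hj, single_mul_mul_single, star_eq_conjTranspose,
    conjTranspose_single, single_mul_single_same, smul_single] at this
  simpa using congrFun (congrFun this k) k

theorem map_mul_single_mul_apply {j : ι} {l : κ} (hj : f ⟨single j j 1, hA j⟩ = single l l 1)
    (x y : A) (k l' : κ) : f (x * ⟨single j j 1, hA j⟩ * y) k l' = f x k l * f y l l' := by
  rw [map_mul, map_mul, hj, mul_apply, Finset.sum_eq_single l]
  · rw [mul_single_apply_same, mul_one]
  · intro t _ ht
    rw [mul_single_apply_of_ne (hbj := ht), zero_mul]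
  · simp

theorem apply_mul_star_apply_eq_of_map_single_eq
    (hf : ∀ i, f ⟨single i i 1, hA i⟩ = 0 ∨ ∃ k, f ⟨single i i 1, hA i⟩ = single k k 1)
    (hfg : ∀ i, f ⟨single i i 1, hA i⟩ = g ⟨single i i 1, hA i⟩) (x y : A) (k l : κ) :
    f x k l * star (f y k l) = g x k l * star (g y k l) := by
  have hg (i : ι) : g ⟨single i i 1, hA i⟩ = 0 ∨ ∃ k, g ⟨single i i 1, hA i⟩ = single k k 1 :=
    hfg i ▸ hf i
  by_cases h : (∃ i, f ⟨single i i 1, hA i⟩ = single k k 1) ∧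
      ∃ j, f ⟨single j j 1, hA j⟩ = single l l 1
  · obtain ⟨⟨i, hi⟩, j, hj⟩ := h
    rw [map_apply_mul_star_map_apply hA f hi hj,
      map_apply_mul_star_map_apply hA g ((hfg i).symm.trans hi) ((hfg j).symm.trans hj)]
  · have hfx : f x k l = 0 := by
      by_contra hx
      exact h (exists_map_single_eq_of_apply_ne_zero hA f hf hx)
    have hgx : g x k l = 0 := by
      by_contra hx
      simp only [hfg] at h
      exact h (exists_map_single_eq_of_apply_ne_zero hA g hg hx)
    rw [hfx, hgx, zero_mul, zero_mul]

theorem exists_circle_diagonal_conj_eq_of_map_single_eq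
    (hf : ∀ i, f ⟨single i i 1, hA i⟩ = 0 ∨ ∃ k, f ⟨single i i 1, hA i⟩ = single k k 1)
    (hfg : ∀ i, f ⟨single i i 1, hA i⟩ = g ⟨single i i 1, hA i⟩) :
    ∃ v : κ → Circle, ∀ x : A,
      g x = (diagonal fun k => (v k : ℂ))ᴴ * f x * diagonal fun k => (v k : ℂ) := by
  choose u hu using fun k l => Complex.exists_circle_mul_of_mul_star_eq (fun x : A => f x k l)
    (fun x => g x k l) (apply_mul_star_apply_eq_of_map_single_eq hA f g hf hfg · · k l)
  let R (k l : κ) : Prop := ∃ x : A, f x k l ≠ 0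
  have hsymm {k l} : R k l → R l k := by
    rintro ⟨x, hx⟩
    refine ⟨star x, ?_⟩
    rwa [map_star, star_eq_conjTranspose, conjTranspose_apply, star_ne_zero]
  have hcomp {k l l'} : R k l → R l l' → R k l' ∧ u k l' = u k l * u l l' := by
    rintro ⟨x, hx⟩ ⟨y, hy⟩
    obtain ⟨j, hj⟩ := (exists_map_single_eq_of_apply_ne_zero hA f hf hx).2
    have hfz := map_mul_single_mul_apply hA f hj x y k l'
    have hgz := map_mul_single_mul_apply hA g ((hfg j).symm.trans hj) x y k l'
    have hz : f (x * ⟨single j j 1, hA j⟩ * y) k l' ≠ 0 := hfz ▸ mul_ne_zero hx hy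
    refine ⟨⟨_, hz⟩, Circle.coe_injective (mul_right_cancel₀ hz ?_)⟩
    rw [← hu, hgz, hu, hu, hfz, Circle.coe_mul]
    ring
  obtain ⟨v, hv⟩ := exists_coboundary_of_cocycle (R := R) hsymm (fun h h' => (hcomp h h').1) u
    (fun h h' => (hcomp h h').2)
  refine ⟨v, fun x => ?_⟩
  ext k l
  rw [diagonal_conjTranspose, mul_diagonal, diagonal_mul, hu]
  by_cases hx : f x k l = 0
  · simp [hx]
  · rw [hv ⟨x, hx⟩, Circle.coe_mul, Circle.coe_inv_eq_conj]
    simp only [Pi.star_apply, Complex.star_def]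
    ring

end MatrixUnits

def IsStarExtHom.toNonUnitalStarAlgHom {n m : ℕ} {r₁ : Fin n → Fin n → Prop}
    {r₂ : Fin m → Fin m → Prop} {Φ : Matrix (Fin n) (Fin n) ℂ → Matrix (Fin m) (Fin m) ℂ}
    (hΦ : IsStarExtHom n m r₁ r₂ Φ) :
    StarAlgebra.adjoin ℂ (digraphAlg n r₁) →⋆ₙₐ[ℂ] Matrix (Fin m) (Fin m) ℂ where
  toFun x := Φ x
  map_smul' c x := hΦ.2.1 c x x.2
  map_zero' := by simpa using hΦ.2.1 0 0 (zero_mem _)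
  map_add' x y := hΦ.1 x x.2 y y.2
  map_mul' x y := hΦ.2.2.1 x x.2 y y.2
  map_star' x := hΦ.2.2.2.1 x x.2

theorem multiplicityOne_agree_on_diagonal_conjugate_general (n m : ℕ)
    (r₁ : Fin n → Fin n → Prop) (r₂ : Fin m → Fin m → Prop)
    (h₁refl : Reflexive r₁)
    (Φ Ψ : Matrix (Fin n) (Fin n) ℂ → Matrix (Fin m) (Fin m) ℂ)
    (hΦ : IsStarExtHom n m r₁ r₂ Φ) (hΦmult : MultOne n m Φ)
    (hΨ : IsStarExtHom n m r₁ r₂ Ψ)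
    (heq : ∀ i : Fin n, Φ (Matrix.single i i (1 : ℂ)) = Ψ (Matrix.single i i (1 : ℂ)))
    (hdiag : ∀ i : Fin n, (Φ (Matrix.single i i (1 : ℂ))).IsDiag) :
    ∃ V : Matrix (Fin m) (Fin m) ℂ, V.IsDiag ∧ (∀ i, ‖V i i‖ = 1) ∧
      ∀ x ∈ cstarAlg n r₁, Ψ x = Vᴴ * Φ x * V := by
  have hA (i : Fin n) : single i i (1 : ℂ) ∈ StarAlgebra.adjoin ℂ (digraphAlg n r₁) := by
    refine StarAlgebra.subset_adjoin ℂ _ fun a b hab => ?_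
    rw [single_apply, if_neg]
    rintro ⟨rfl, rfl⟩
    exact hab (h₁refl _)
  have hidem (i : Fin n) : IsIdempotentElem (⟨single i i 1, hA i⟩ : StarAlgebra.adjoin ℂ _) :=
    Subtype.ext (by simp [single_mul_single_same])
  have hf (i : Fin n) := (hdiag i).eq_zero_or_eq_single_of_rank_le_one
    ((hidem i).map hΦ.toNonUnitalStarAlgHom) (hΦmult i)
  obtain ⟨v, hv⟩ := exists_circle_diagonal_conj_eq_of_map_single_eq hA hΦ.toNonUnitalStarAlgHom
    hΨ.toNonUnitalStarAlgHom hf heq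
  exact ⟨diagonal fun k => (v k : ℂ), isDiag_diagonal _, fun k => by simp [Circle.norm_coe],
    fun x hx => hv ⟨x, hx⟩⟩

/-- Two multiplicity-one star-extendible homomorphisms which agree on the
diagonal matrix units (with diagonal values there) are conjugate by a diagonal unitary. -/
theorem multiplicityOne_agree_on_diagonal_conjugate (n m : ℕ)
    (r₁ : Fin n → Fin n → Prop) (r₂ : Fin m → Fin m → Prop)
    (h₁refl : Reflexive r₁) (h₁trans : Transitive r₁)
    (h₂refl : Reflexive r₂) (h₂trans : Transitive r₂)
    (Φ Ψ : Matrix (Fin n) (Fin n) ℂ → Matrix (Fin m) (Fin m) ℂ)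
    (hΦ : IsStarExtHom n m r₁ r₂ Φ) (hΦmult : MultOne n m Φ)
    (hΨ : IsStarExtHom n m r₁ r₂ Ψ) (hΨmult : MultOne n m Ψ)
    (heq : ∀ i : Fin n, Φ (Matrix.single i i (1 : ℂ)) = Ψ (Matrix.single i i (1 : ℂ)))
    (hdiag : ∀ i : Fin n, (Φ (Matrix.single i i (1 : ℂ))).IsDiag) :
    ∃ V : Matrix (Fin m) (Fin m) ℂ, V.IsDiag ∧ (∀ i, ‖V i i‖ = 1) ∧
      ∀ x ∈ cstarAlg n r₁, Ψ x = Vᴴ * Φ x * V :=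
  multiplicityOne_agree_on_diagonal_conjugate_general n m r₁ r₂ h₁refl Φ Ψ hΦ hΦmult hΨ heq hdiag

end
end

section
/- Let v ∈ Matrix (Fin n) (Fin n) ℂ be a partial isometry, i.e. v · vᴴ · v = v. Then v normalises the diagonal masa — meaning vᴴ · d · v and v · d · vᴴ are diagonal matrices for every diagonal matrix d — if and only if every entry of v is either 0 or of modulus 1 and v has at most one nonzero entry in each row and at most one nonzero entry in each column; equivalently, if and only if v = c · w where c is a diagonal unitary and w is a matrix with entries in {0,1} having at most one 1 in each row and in each column. -/
open Matrix

noncomputable section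

/-! Testing `vᴴ d v` against the diagonal matrix units `d = Eₖₖ` shows that `v` normalises the
diagonal exactly when every row and every column of `v` has at most one nonzero entry. For such
`v` the `(i, j)` entry of `v vᴴ v` is `|vᵢⱼ|² vᵢⱼ`, so `v vᴴ v = v` forces the nonzero entries to be
unimodular; then `v = c w` with `cᵢᵢ` the nonzero entry of row `i` and `w` the support of `v`. -/

namespace Matrix

variable {m n α : Type*} [Fintype m]

section Normaliser

variable [DecidableEq m] [Semiring α] [StarRing α]

theorem conjTranspose_mul_diagonal_mul_apply (v : Matrix m n α) (f : m → α) (a b : n) :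
    (vᴴ * diagonal f * v) a b = ∑ k, star (v k a) * f k * v k b := by
  simp only [mul_apply (M := vᴴ * diagonal f), mul_diagonal, conjTranspose_apply]

variable [NoZeroDivisors α]

theorem forall_isDiag_conjTranspose_mul_mul_iff (v : Matrix m n α) :
    (∀ d : Matrix m m α, d.IsDiag → (vᴴ * d * v).IsDiag) ↔
      ∀ i j₁ j₂, v i j₁ ≠ 0 → v i j₂ ≠ 0 → j₁ = j₂ := by
  constructor
  · intro h i j₁ j₂ h₁ h₂
    by_contra hne
    have hentry := h _ (isDiag_diagonal (Pi.single i 1)) hne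
    simp [conjTranspose_mul_diagonal_mul_apply, Pi.single_apply, h₁, h₂] at hentry
  · intro h d hd a b hab
    rw [← hd.diagonal_diag, conjTranspose_mul_diagonal_mul_apply]
    refine Finset.sum_eq_zero fun k _ => ?_
    by_cases hka : v k a = 0
    · simp [hka]
    · rw [not_not.mp (mt (h k a b hka) hab), mul_zero]

theorem forall_isDiag_mul_mul_conjTranspose_iff (v : Matrix n m α) :
    (∀ d : Matrix m m α, d.IsDiag → (v * d * vᴴ).IsDiag) ↔
      ∀ i₁ i₂ j, v i₁ j ≠ 0 → v i₂ j ≠ 0 → i₁ = i₂ := by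
  simpa [conjTranspose_apply, forall_comm (α := m)] using
    forall_isDiag_conjTranspose_mul_mul_iff vᴴ

end Normaliser

section PartialIsometry

variable [Fintype n]

theorem mul_conjTranspose_mul_apply_of_ne_zero [Semiring α] [StarRing α] {v : Matrix m n α}
    (hrow : ∀ i j₁ j₂, v i j₁ ≠ 0 → v i j₂ ≠ 0 → j₁ = j₂)
    (hcol : ∀ i₁ i₂ j, v i₁ j ≠ 0 → v i₂ j ≠ 0 → i₁ = i₂) {i : m} {j : n} (hij : v i j ≠ 0) :
    (v * vᴴ * v) i j = v i j * star (v i j) * v i j := by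
  have hdiag : (vᴴ * v) j j = star (v i j) * v i j := by
    refine Fintype.sum_eq_single i fun l hl => ?_
    simp only [conjTranspose_apply, not_not.mp (mt (hcol l i j · hij) hl), mul_zero]
  rw [Matrix.mul_assoc, mul_apply, Fintype.sum_eq_single j fun k hk => ?_, hdiag, mul_assoc]
  rw [not_not.mp (mt (hrow i k j · hij) hk), zero_mul]

theorem eq_zero_or_norm_eq_one_of_mul_conjTranspose_mul_eq {𝕜 : Type*} [RCLike 𝕜]
    {v : Matrix m n 𝕜} (hv : v * vᴴ * v = v)
    (hrow : ∀ i j₁ j₂, v i j₁ ≠ 0 → v i j₂ ≠ 0 → j₁ = j₂)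
    (hcol : ∀ i₁ i₂ j, v i₁ j ≠ 0 → v i₂ j ≠ 0 → i₁ = i₂) (i : m) (j : n) :
    v i j = 0 ∨ ‖v i j‖ = 1 := by
  refine or_iff_not_imp_left.mpr fun hij => ?_
  have hidem : v i j * star (v i j) * v i j = v i j := by
    rw [← mul_conjTranspose_mul_apply_of_ne_zero hrow hcol hij, hv]
  have hsq : (‖v i j‖ : 𝕜) ^ 2 = 1 := by
    rw [← RCLike.mul_conj]
    exact mul_right_cancel₀ hij (hidem.trans (one_mul _).symm)
  exact (pow_eq_one_iff_of_nonneg (norm_nonneg _) two_ne_zero).mp (by exact_mod_cast hsq)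

end PartialIsometry

section Factorisation

variable [DecidableEq m]

theorem IsDiag.mul_apply [NonUnitalNonAssocSemiring α] {c : Matrix m m α} (hc : c.IsDiag)
    (w : Matrix m n α) (i : m) (j : n) : (c * w) i j = c i i * w i j := by
  rw [← hc.diagonal_diag, diagonal_mul, diagonal_apply_eq]

theorem exists_isDiag_mul_eq_iff [NormedRing α] [NormOneClass α] (v : Matrix m n α) :
    (∃ (c : Matrix m m α) (w : Matrix m n α), c.IsDiag ∧ (∀ i, ‖c i i‖ = 1) ∧
        (∀ i j, w i j = 0 ∨ w i j = 1) ∧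
        (∀ i j₁ j₂, w i j₁ ≠ 0 → w i j₂ ≠ 0 → j₁ = j₂) ∧
        (∀ i₁ i₂ j, w i₁ j ≠ 0 → w i₂ j ≠ 0 → i₁ = i₂) ∧
        v = c * w) ↔
      (∀ i j, v i j = 0 ∨ ‖v i j‖ = 1) ∧
        (∀ i j₁ j₂, v i j₁ ≠ 0 → v i j₂ ≠ 0 → j₁ = j₂) ∧
        (∀ i₁ i₂ j, v i₁ j ≠ 0 → v i₂ j ≠ 0 → i₁ = i₂) := by
  classical
  constructor
  · rintro ⟨c, w, hc, hcnorm, hw, hwrow, hwcol, rfl⟩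
    have hsupp : ∀ i j, (c * w) i j ≠ 0 → w i j ≠ 0 := fun i j h hw₀ => by
      simp [hc.mul_apply, hw₀] at h
    refine ⟨fun i j => ?_, fun i j₁ j₂ h₁ h₂ => hwrow i j₁ j₂ (hsupp _ _ h₁) (hsupp _ _ h₂),
      fun i₁ i₂ j h₁ h₂ => hwcol i₁ i₂ j (hsupp _ _ h₁) (hsupp _ _ h₂)⟩
    rcases hw i j with h | h <;> simp [hc.mul_apply, h, hcnorm]
  · rintro ⟨hnorm, hrow, hcol⟩
    let phase i := if h : ∃ j, v i j ≠ 0 then v i h.choose else 1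
    let w : Matrix m n α := of fun i j => if v i j = 0 then 0 else 1
    have hw : ∀ i j, w i j ≠ 0 → v i j ≠ 0 := fun i j h hv => h (by simp [w, hv])
    refine ⟨diagonal phase, w, isDiag_diagonal _, fun i => ?_, fun i j => ?_,
      fun i j₁ j₂ h₁ h₂ => hrow i j₁ j₂ (hw _ _ h₁) (hw _ _ h₂),
      fun i₁ i₂ j h₁ h₂ => hcol i₁ i₂ j (hw _ _ h₁) (hw _ _ h₂), ?_⟩
    · by_cases h : ∃ j, v i j ≠ 0
      · simpa [phase, h] using (hnorm i h.choose).resolve_left h.choose_spec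
      · simp [phase, h]
    · by_cases h : v i j = 0 <;> simp [w, h]
    · ext i j
      by_cases h : v i j = 0
      · simp [w, h]
      · have hex : ∃ j, v i j ≠ 0 := ⟨j, h⟩
        simp [w, phase, h, hex, hrow i _ j hex.choose_spec h]

end Factorisation

end Matrix

/-- A partial isometry `v` normalises the diagonal masa of `Mₙ(ℂ)` iff its
entries are `0` or unimodular with at most one nonzero entry in each row and column;
equivalently, iff `v = c · w` with `c` a diagonal unitary and `w` a `0–1` matrix with at most
one `1` in each row and column. -/
theorem partialIsometry_normalises_diagonal_iff (n : ℕ)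
    (v : Matrix (Fin n) (Fin n) ℂ) (hv : v * vᴴ * v = v) :
    ((∀ d : Matrix (Fin n) (Fin n) ℂ, d.IsDiag → (vᴴ * d * v).IsDiag ∧ (v * d * vᴴ).IsDiag) ↔
      ((∀ i j, v i j = 0 ∨ ‖v i j‖ = 1) ∧
       (∀ i j₁ j₂, v i j₁ ≠ 0 → v i j₂ ≠ 0 → j₁ = j₂) ∧
       (∀ i₁ i₂ j, v i₁ j ≠ 0 → v i₂ j ≠ 0 → i₁ = i₂))) ∧
    ((∀ d : Matrix (Fin n) (Fin n) ℂ, d.IsDiag → (vᴴ * d * v).IsDiag ∧ (v * d * vᴴ).IsDiag) ↔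
      (∃ c w : Matrix (Fin n) (Fin n) ℂ, c.IsDiag ∧ (∀ i, ‖c i i‖ = 1) ∧
        (∀ i j, w i j = 0 ∨ w i j = 1) ∧
        (∀ i j₁ j₂, w i j₁ ≠ 0 → w i j₂ ≠ 0 → j₁ = j₂) ∧
        (∀ i₁ i₂ j, w i₁ j ≠ 0 → w i₂ j ≠ 0 → i₁ = i₂) ∧
        v = c * w)) := by
  have hnormalises : (∀ d : Matrix (Fin n) (Fin n) ℂ, d.IsDiag →
      (vᴴ * d * v).IsDiag ∧ (v * d * vᴴ).IsDiag) ↔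
      (∀ i j₁ j₂, v i j₁ ≠ 0 → v i j₂ ≠ 0 → j₁ = j₂) ∧
        (∀ i₁ i₂ j, v i₁ j ≠ 0 → v i₂ j ≠ 0 → i₁ = i₂) := by
    simp only [imp_and, forall_and, forall_isDiag_conjTranspose_mul_mul_iff,
      forall_isDiag_mul_mul_conjTranspose_iff]
  have hentries := hnormalises.trans (and_iff_right_of_imp fun hsupp =>
    eq_zero_or_norm_eq_one_of_mul_conjTranspose_mul_eq hv hsupp.1 hsupp.2).symm
  exact ⟨hentries, hentries.trans (exists_isDiag_mul_eq_iff v).symm⟩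

end
end
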